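/- Let L be a nilpotent Lie subalgebra of W(A) with rk_R(L) = 3 and F = R^L its field of constants. If the center Z(L) of L satisfies rk_R(Z(L)) = 2 and dim_F(FL) ≥ 4, then there exist D₁, D₂, D₃ ∈ L, an element a ∈ R, and an integer n ≥ 1 such that [Dᵢ, Dⱼ] = 0 for all i, j ∈ {1,2,3}, D₁(a) = D₂(a) = 0, D₃(a) = 1, and FL is contained in the subalgebra of W(A) spanned over F by {D₃} ∪ {aⁱ/i!·D₁ : 0 ≤ i ≤ n} ∪ {aⁱ/i!·D₂ : 0 ≤ i ≤ n}. -/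

import Mathlib

/-!
Pick central `D₁, D₂ ∈ L`, independent over `R`, and `T ∈ L` completing them to an `R`-basis of
`RL`. Every `X ∈ L` is `c₀ T + c₁ D₁ + c₂ D₂` with coefficients killed by `D₁, D₂` (centrality)
and by a power of `T` (nilpotency of `ad T`). If all coefficients were `T`-constants, `FL` would
be spanned over `F` by `T, D₁, D₂`, against `dim_F FL ≥ 4`; so some coefficient is not, and a
suitable quotient of its iterated `T`-derivatives is an `a` with `D₁ a = D₂ a = 0`, `T a = 1`.
Then `X ↦ X a = c₀` maps `L` to the Witt-type algebra `R T`, which for nilpotent `L` forces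
`T c₀ = 0`, i.e. `c₀ ∈ F`. Finally an element killed by `D₁, D₂` and `Tⁿ⁺¹` is integrated one step
at a time into an `F`-combination of the `aⁱ / i!`, `i ≤ n`.
-/

noncomputable section

/-- The field of constants of a set of `K`-derivations of a field `R`:
`{r ∈ R | D r = 0 for all D ∈ S}`. -/
def derivConstants (K R : Type*) [CommRing K] [Field R] [Algebra K R]
    (S : Set (Derivation K R R)) : Subfield R where
  carrier := {r : R | ∀ D ∈ S, D r = 0}
  mul_mem' := by
    intro a b ha hb D hD
    rw [Derivation.leibniz]
    simp [ha D hD, hb D hD]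
  one_mem' := by intro D _; simp
  add_mem' := by intro a b ha hb D hD; simp [ha D hD, hb D hD]
  zero_mem' := by intro D _; simp
  neg_mem' := by intro a ha D hD; simp [ha D hD]
  inv_mem' := by
    intro a ha D hD
    rcases eq_or_ne a 0 with h | h
    · simp [h]
    · have h1 : D (a * a⁻¹) = 0 := by rw [mul_inv_cancel₀ h]; simp
      rw [Derivation.leibniz, ha D hD] at h1
      simpa [h] using h1

/-- `W(A) = R · Der_K(A)` : the `R`-span, inside `Der_K(R)`, of the set of `K`-derivations
of `R` that map the image of `A` into itself.  Here `R` is the fraction field of the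
integral domain `A`. -/
def wAlg (K A R : Type*) [Field K] [CommRing A] [IsDomain A] [Algebra K A]
    [Field R] [Algebra A R] [IsFractionRing A R] [Algebra K R] [IsScalarTower K A R] :
    Submodule R (Derivation K R R) :=
  Submodule.span R
    {D : Derivation K R R | ∀ a : A, ∃ b : A, D (algebraMap A R a) = algebraMap A R b}

open Submodule Set

section LinearAlgebra

variable {K V : Type*} [DivisionRing K] [AddCommGroup V] [Module K V]

lemma rank_span_range_fin {n : ℕ} {v : Fin n → V} (hv : LinearIndependent K v) :
    Module.rank K (span K (range v)) = n := by
  simpa [rank_span hv] using Cardinal.mk_range_eq_of_injective hv.injective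

lemma natCast_le_rank_span_of_linearIndependent {n : ℕ} {v : Fin n → V}
    (hv : LinearIndependent K v) {s : Set V} (hvs : ∀ i, v i ∈ s) :
    (n : Cardinal) ≤ Module.rank K (span K s) :=
  rank_span_range_fin hv ▸ rank_mono (span_mono (range_subset_iff.2 hvs))

lemma exists_mem_notMem_span_of_lt_rank {n : ℕ} {v : Fin n → V} (hv : LinearIndependent K v)
    {s : Set V} (h : (n : Cardinal) < Module.rank K (span K s)) :
    ∃ x ∈ s, x ∉ span K (range v) := by
  by_contra! hs
  exact h.not_ge (rank_span_range_fin hv ▸ rank_mono (span_le.2 hs))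

lemma exists_linearIndependent_fin_of_le_rank_span {s : Set V} :
    ∀ {n : ℕ}, (n : Cardinal) ≤ Module.rank K (span K s) →
      ∃ v : Fin n → V, (∀ i, v i ∈ s) ∧ LinearIndependent K v
  | 0, _ => ⟨Fin.elim0, fun i => i.elim0, linearIndependent_empty_type⟩
  | n + 1, h => by
    obtain ⟨v, hvs, hv⟩ := exists_linearIndependent_fin_of_le_rank_span
      ((Nat.cast_le.2 n.le_succ).trans h)
    obtain ⟨x, hxs, hx⟩ := exists_mem_notMem_span_of_lt_rank hv
      ((Nat.cast_lt.2 n.lt_succ_self).trans_le h)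
    exact ⟨Fin.cons x v, Fin.cases hxs hvs, hv.finCons hx⟩

lemma exists_linearIndependent_finCons_of_rank_span_eq {s t : Set V} (hts : t ⊆ s) {n : ℕ}
    (ht : (n : Cardinal) ≤ Module.rank K (span K t))
    (hs : Module.rank K (span K s) = n + 1) :
    ∃ x ∈ s, ∃ v : Fin n → V, (∀ i, v i ∈ t) ∧
      LinearIndependent K (Fin.cons x v : Fin (n + 1) → V) ∧
      s ⊆ span K (range (Fin.cons x v : Fin (n + 1) → V)) := by
  obtain ⟨v, hvt, hv⟩ := exists_linearIndependent_fin_of_le_rank_span ht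
  obtain ⟨x, hxs, hx⟩ := exists_mem_notMem_span_of_lt_rank hv
    (by rw [hs]; exact_mod_cast n.lt_succ_self)
  have hxv : LinearIndependent K (Fin.cons x v : Fin (n + 1) → V) := hv.finCons hx
  refine ⟨x, hxs, v, hvt, hxv, fun y hys => ?_⟩
  by_contra hy
  have := natCast_le_rank_span_of_linearIndependent (hxv.finCons hy)
    (Fin.cases hys (Fin.cases hxs fun i => hts (hvt i)))
  rw [hs] at this
  norm_cast at this
  omega

end LinearAlgebra

lemma exists_apply_iterate_ne_zero_of_iterate_eq_zero {M : Type*} [Zero M] {f : M → M}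
    (hf : f 0 = 0) {r : M} (hr : f r ≠ 0) {k : ℕ} (hk : f^[k] r = 0) :
    ∃ j, f (f^[j] r) ≠ 0 ∧ f (f (f^[j] r)) = 0 := by
  induction k generalizing r with
  | zero => exact absurd (hk ▸ hf) hr
  | succ k ih =>
    by_cases hfr : f (f r) = 0
    · exact ⟨0, hr, hfr⟩
    · obtain ⟨j, hj⟩ := ih hfr hk
      exact ⟨j + 1, hj⟩

namespace Derivation

variable {K R ι : Type*} [CommRing K] [CommRing R] [Algebra K R] [Fintype ι]
  {Z : Derivation K R R} {e : ι → Derivation K R R}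

lemma lie_sum_smul (hZ : ∀ i, ⁅Z, e i⁆ = 0) (c : ι → R) :
    ⁅Z, ∑ i, c i • e i⁆ = ∑ i, Z (c i) • e i := by
  simp [lie_sum, hZ]

lemma iterate_lie_sum_smul (hZ : ∀ i, ⁅Z, e i⁆ = 0) (c : ι → R) (k : ℕ) :
    (fun X => ⁅Z, X⁆)^[k] (∑ i, c i • e i) = ∑ i, (⇑Z)^[k] (c i) • e i := by
  induction k with
  | zero => rfl
  | succ k ih =>
    simp only [Function.iterate_succ_apply', ih, lie_sum_smul hZ]

lemma iterate_apply_eq_zero_of_iterate_lie_eq_zero (he : LinearIndependent R e)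
    (hZ : ∀ i, ⁅Z, e i⁆ = 0) {c : ι → R} {k : ℕ}
    (h : (fun X => ⁅Z, X⁆)^[k] (∑ i, c i • e i) = 0) (i : ι) : (⇑Z)^[k] (c i) = 0 := by
  rw [iterate_lie_sum_smul hZ] at h
  exact Fintype.linearIndependent_iff.1 he _ h i

lemma apply_eq_apply_mul_of_mem_span {𝒟 : Set (Derivation K R R)} {T X : Derivation K R R}
    (hX : X ∈ span R (insert T 𝒟)) {a s : R} (ha : ∀ D ∈ 𝒟, D a = 0) (hTa : T a = 1)
    (hs : ∀ D ∈ 𝒟, D s = 0) : X s = X a * T s := by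
  induction hX using Submodule.span_induction with
  | mem D hD =>
    rcases hD with rfl | hD
    · rw [hTa, one_mul]
    · rw [ha D hD, hs D hD, zero_mul]
  | zero => simp
  | add X Y _ _ hX hY => simp only [add_apply, hX, hY, add_mul]
  | smul r X _ hX => simp only [smul_apply, hX, smul_eq_mul, mul_assoc]

end Derivation

section Constants

variable {K R : Type*} [CommRing K] [Field R] [Algebra K R] {𝒟 : Set (Derivation K R R)}

lemma mem_derivConstants {r : R} : r ∈ derivConstants K R 𝒟 ↔ ∀ D ∈ 𝒟, D r = 0 := Iff.rfl

lemma mem_derivConstants_insert {T : Derivation K R R} {r : R} :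
    r ∈ derivConstants K R (insert T 𝒟) ↔ T r = 0 ∧ r ∈ derivConstants K R 𝒟 := by
  simp [mem_derivConstants]

lemma derivConstants_antitone : Antitone (derivConstants K R) :=
  fun _ _ h _ hr D hD => hr D (h hD)

lemma derivConstants_span : derivConstants K R (span R 𝒟) = derivConstants K R 𝒟 := by
  refine le_antisymm (derivConstants_antitone subset_span) fun r hr D hD => ?_
  induction hD using Submodule.span_induction with
  | mem D hD => exact hr D hD
  | zero => rfl
  | add X Y _ _ hX hY => simp [hX, hY]
  | smul c X _ hX => simp [hX]

lemma derivConstants_eq_of_subset_of_subset_span {𝒟' : Set (Derivation K R R)} (h : 𝒟 ⊆ 𝒟')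
    (h' : 𝒟' ⊆ span R 𝒟) : derivConstants K R 𝒟' = derivConstants K R 𝒟 :=
  le_antisymm (derivConstants_antitone h)
    (derivConstants_span (𝒟 := 𝒟) ▸ derivConstants_antitone h')

lemma mapsTo_derivConstants {X : Derivation K R R} (hX : ∀ D ∈ 𝒟, ⁅D, X⁆ = 0) :
    MapsTo X (derivConstants K R 𝒟) (derivConstants K R 𝒟) := fun r hr D hD => by
  have := congr($(hX D hD) r)
  rwa [Derivation.commutator_apply, hr D hD, map_zero, Derivation.zero_apply, sub_zero] at this

variable {T : Derivation K R R}

lemma exists_mem_derivConstants_apply_eq_one (hT : ∀ D ∈ 𝒟, ⁅D, T⁆ = 0) {r : R}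
    (hr : r ∈ derivConstants K R 𝒟) (hTr : T r ≠ 0) {k : ℕ} (hk : T^[k] r = 0) :
    ∃ a ∈ derivConstants K R 𝒟, T a = 1 := by
  obtain ⟨j, hq, hTq⟩ := exists_apply_iterate_ne_zero_of_iterate_eq_zero (map_zero T) hTr hk
  have hqS := (mapsTo_derivConstants hT).iterate j hr
  refine ⟨T^[j] r / T (T^[j] r), div_mem hqS (mapsTo_derivConstants hT hqS), ?_⟩
  rw [Derivation.leibniz_div_const _ _ _ hTq, smul_eq_mul, inv_mul_cancel₀ hq]

variable [CharZero R]

lemma Derivation.apply_pow_succ_div_factorial {a : R} (ha : T a = 1) (i : ℕ) :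
    T (a ^ (i + 1) / (i + 1).factorial) = a ^ i / i.factorial := by
  rw [Derivation.leibniz_div_const _ _ _ (T.map_natCast _), T.leibniz_pow, ha,
    Nat.factorial_succ]
  have : (i.factorial : R) ≠ 0 := Nat.cast_ne_zero.2 i.factorial_ne_zero
  simp only [nsmul_eq_mul, smul_eq_mul, Nat.add_sub_cancel, Nat.cast_mul]
  field_simp

variable {a : R} (ha : a ∈ derivConstants K R 𝒟) (hTa : T a = 1)
include ha hTa

lemma exists_mem_span_pow_div_factorial_apply_eq {n : ℕ} {v : R}
    (hv : v ∈ span (derivConstants K R (insert T 𝒟)) {x | ∃ i ≤ n, x = a ^ i / i.factorial}) :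
    ∃ w ∈ span (derivConstants K R (insert T 𝒟)) {x | ∃ i ≤ n + 1, x = a ^ i / i.factorial},
      w ∈ derivConstants K R 𝒟 ∧ T w = v := by
  induction hv using Submodule.span_induction with
  | mem x hx =>
    obtain ⟨i, hi, rfl⟩ := hx
    exact ⟨_, subset_span ⟨i + 1, by omega, rfl⟩,
      div_mem (pow_mem ha _) (natCast_mem _ _), T.apply_pow_succ_div_factorial hTa i⟩
  | zero => exact ⟨0, zero_mem _, zero_mem _, map_zero T⟩
  | add x y _ _ hx hy =>
    obtain ⟨w, hw, hwS, rfl⟩ := hx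
    obtain ⟨w', hw', hw'S, rfl⟩ := hy
    exact ⟨w + w', add_mem hw hw', add_mem hwS hw'S, map_add T w w'⟩
  | smul t x _ hx =>
    obtain ⟨w, hw, hwS, rfl⟩ := hx
    have ⟨hTt, htS⟩ := mem_derivConstants_insert.1 t.2
    refine ⟨t • w, smul_mem _ t hw, mul_mem htS hwS, ?_⟩
    change T (t * w) = t * T w
    rw [T.leibniz, hTt, smul_zero, add_zero, smul_eq_mul]

lemma mem_span_pow_div_factorial_of_iterate_eq_zero (hT : ∀ D ∈ 𝒟, ⁅D, T⁆ = 0) {n : ℕ} {r : R}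
    (hr : r ∈ derivConstants K R 𝒟) (hn : T^[n] r = 0) :
    r ∈ span (derivConstants K R (insert T 𝒟)) {x | ∃ i ≤ n, x = a ^ i / i.factorial} := by
  induction n generalizing r with
  | zero => exact (show r = 0 from hn) ▸ zero_mem _
  | succ n ih =>
    obtain ⟨w, hw, hwS, hTw⟩ := exists_mem_span_pow_div_factorial_apply_eq ha hTa
      (ih (mapsTo_derivConstants hT hr) hn)
    have hrw : r - w ∈ derivConstants K R (insert T 𝒟) :=
      mem_derivConstants_insert.2 ⟨by rw [map_sub, hTw, sub_self], sub_mem hr hwS⟩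
    have hone : (1 : R) ∈ {x | ∃ i ≤ n + 1, x = a ^ i / i.factorial} := ⟨0, by omega, by simp⟩
    have := add_mem (smul_mem _ (⟨r - w, hrw⟩ : derivConstants K R (insert T 𝒟))
      (subset_span hone)) hw
    rwa [show (⟨r - w, hrw⟩ : derivConstants K R (insert T 𝒟)) • (1 : R) + w = r by
      change (r - w) * 1 + w = r; ring] at this

end Constants

lemma LieRing.exists_iterate_lie_eq_zero (L : Type*) [LieRing L] [LieRing.IsNilpotent L] :
    ∃ k, ∀ x y : L, (fun z => ⁅x, z⁆)^[k] y = 0 := by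
  obtain ⟨k, hk⟩ := LieAlgebra.nilpotent_ad_of_nilpotent_algebra ℤ L
  exact ⟨k, fun x y => (Module.End.pow_apply _ k y).symm.trans (LinearMap.congr_fun (hk x) y)⟩

lemma LieSubalgebra.exists_iterate_lie_eq_zero {K 𝔤 : Type*} [CommRing K] [LieRing 𝔤]
    [LieAlgebra K 𝔤] (L : LieSubalgebra K 𝔤) [LieRing.IsNilpotent L] :
    ∃ k, ∀ x ∈ L, ∀ y ∈ L, (fun z => ⁅x, z⁆)^[k] y = 0 := by
  obtain ⟨k, hk⟩ := LieRing.exists_iterate_lie_eq_zero L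
  refine ⟨k, fun x hx y hy => ?_⟩
  have hcoe : Function.Semiconj ((↑) : L → 𝔤) (fun z => ⁅(⟨x, hx⟩ : L), z⁆) (fun z => ⁅x, z⁆) :=
    fun _ => rfl
  exact (hcoe.iterate_right k ⟨y, hy⟩).symm.trans (congr_arg _ (hk _ _))

/-- `π` is a Lie map to the Witt-type algebra `R T`, with `⁅f T, g T⁆ = (f T g - g T f) T`.
If `T (π x) ≠ 0`, iterating `ad t` yields `x'` with `T (π x') ≠ 0 = T (T (π x'))`, and then
`π ((ad x')ⁱ t) = (-T (π x'))ⁱ` never vanishes. -/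
theorem Derivation.apply_eq_zero_of_map_lie {K R L : Type*} [CommRing K] [CommRing R] [IsReduced R]
    [Algebra K R] [LieRing L] [LieRing.IsNilpotent L] (T : Derivation K R R) (π : L → R)
    (hπ : ∀ x y, π ⁅x, y⁆ = π x * T (π y) - π y * T (π x)) {t : L} (ht : π t = 1) (x : L) :
    T (π x) = 0 := by
  obtain ⟨k, had⟩ := LieRing.exists_iterate_lie_eq_zero L
  have hπ0 : π 0 = 0 := by rw [← lie_zero (0 : L), hπ, sub_self]
  have hπt : ∀ j y, π ((fun z => ⁅t, z⁆)^[j] y) = T^[j] (π y) := fun j y => by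
    induction j with
    | zero => rfl
    | succ j ih => simp [Function.iterate_succ_apply', hπ, ht, ih]
  by_contra hx
  obtain ⟨j, hq, hTq⟩ := exists_apply_iterate_ne_zero_of_iterate_eq_zero (map_zero T) hx
    (by rw [← hπt, had, hπ0])
  set x' := (fun z => ⁅t, z⁆)^[j] x
  have hπx' : π x' = T^[j] (π x) := hπt j x
  have hπx't : ∀ i, π ((fun z => ⁅x', z⁆)^[i] t) = (-T (π x')) ^ i := fun i => by
    induction i with
    | zero => simpa using ht
    | succ i ih =>
      rw [Function.iterate_succ_apply', hπ, ih, T.leibniz_pow, map_neg, hπx', hTq]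
      ring
  have hpow : (-T (π x')) ^ k = 0 := by rw [← hπx't, had, hπ0]
  exact hq (hπx' ▸ neg_eq_zero.1 (eq_zero_of_pow_eq_zero hpow))

lemma Matrix.range_cons_cons_cons_empty {α : Type*} (x y z : α) (u : Fin 0 → α) :
    range (Matrix.vecCons x (Matrix.vecCons y (Matrix.vecCons z u))) = {x, y, z} := by
  rw [Matrix.range_cons, Matrix.range_cons_cons_empty, singleton_union]

section CentralFrame

variable {K R : Type*} [CommRing K] [Field R] [Algebra K R]
  {L : LieSubalgebra K (Derivation K R R)} {T D₁ D₂ : Derivation K R R}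

structure IsCentralFrame (L : LieSubalgebra K (Derivation K R R))
    (T D₁ D₂ : Derivation K R R) : Prop where
  mem : T ∈ L
  fst_mem : D₁ ∈ L
  snd_mem : D₂ ∈ L
  lie_eq_zero : ∀ D ∈ ({D₁, D₂} : Set (Derivation K R R)), ∀ Y ∈ L, ⁅D, Y⁆ = 0
  linearIndependent : LinearIndependent R ![T, D₁, D₂]
  subset_span : (L : Set (Derivation K R R)) ⊆ span R {T, D₁, D₂}

lemma exists_isCentralFrame (hrk : Module.rank R (span R (L : Set (Derivation K R R))) = 3)
    (hZ : 2 ≤ Module.rank R (span R {x : Derivation K R R | x ∈ L ∧ ∀ y ∈ L, ⁅x, y⁆ = 0})) :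
    ∃ T D₁ D₂, IsCentralFrame L T D₁ D₂ := by
  obtain ⟨T, hTL, d, hdZ, he, hLe⟩ :=
    exists_linearIndependent_finCons_of_rank_span_eq (fun _ h => h.1) hZ (by rw [hrk]; norm_num)
  have hd : (Fin.cons T d : Fin 3 → Derivation K R R) = ![T, d 0, d 1] := by
    ext i; fin_cases i <;> rfl
  rw [hd, Matrix.range_cons_cons_cons_empty] at hLe
  refine ⟨T, d 0, d 1, ⟨hTL, (hdZ 0).1, (hdZ 1).1, ?_, hd ▸ he, hLe⟩⟩
  rintro D (rfl | rfl)
  exacts [(hdZ 0).2, (hdZ 1).2]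

namespace IsCentralFrame

variable (hf : IsCentralFrame L T D₁ D₂)
include hf

lemma mem_apply (i : Fin 3) : ![T, D₁, D₂] i ∈ L := by
  fin_cases i
  exacts [hf.mem, hf.fst_mem, hf.snd_mem]

lemma pair_lie_eq_zero : ∀ D ∈ ({D₁, D₂} : Set (Derivation K R R)), ⁅D, T⁆ = 0 :=
  fun D hD => hf.lie_eq_zero D hD T hf.mem

lemma lie_apply_eq_zero (i : Fin 3) : ⁅T, ![T, D₁, D₂] i⁆ = 0 := by
  rw [← lie_skew]
  fin_cases i
  · simp
  · simp [hf.pair_lie_eq_zero D₁ (by simp)]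
  · simp [hf.pair_lie_eq_zero D₂ (by simp)]

lemma derivConstants_eq :
    derivConstants K R L = derivConstants K R {T, D₁, D₂} :=
  derivConstants_eq_of_subset_of_subset_span
    (by simp [insert_subset_iff, hf.mem, hf.fst_mem, hf.snd_mem]) hf.subset_span

lemma exists_coeffs [LieRing.IsNilpotent L] :
    ∃ k, ∀ X ∈ L, ∃ c : Fin 3 → R, X = ∑ i, c i • ![T, D₁, D₂] i ∧
      ∀ i, c i ∈ derivConstants K R {D₁, D₂} ∧ T^[k] (c i) = 0 := by
  obtain ⟨k, hk⟩ := L.exists_iterate_lie_eq_zero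
  refine ⟨k, fun X hX => ?_⟩
  obtain ⟨c, rfl⟩ := (mem_span_range_iff_exists_fun R).1
    (Matrix.range_cons_cons_cons_empty T D₁ D₂ ![] ▸ hf.subset_span hX)
  refine ⟨c, rfl, fun i => ⟨fun D hD => ?_, ?_⟩⟩
  · exact Derivation.iterate_apply_eq_zero_of_iterate_lie_eq_zero (k := 1) hf.linearIndependent
      (fun j => hf.lie_eq_zero D hD _ (hf.mem_apply j)) (hf.lie_eq_zero D hD _ hX) i
  · exact Derivation.iterate_apply_eq_zero_of_iterate_lie_eq_zero hf.linearIndependent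
      hf.lie_apply_eq_zero (hk T hf.mem _ hX) i

lemma exists_apply_eq_one [LieRing.IsNilpotent L]
    (hdim : 4 ≤ Module.rank (derivConstants K R {T, D₁, D₂})
      (span (derivConstants K R {T, D₁, D₂}) (L : Set (Derivation K R R)))) :
    ∃ a ∈ derivConstants K R {D₁, D₂}, T a = 1 := by
  by_contra! ha
  obtain ⟨k, hk⟩ := hf.exists_coeffs
  have hle : span (derivConstants K R {T, D₁, D₂}) (L : Set (Derivation K R R)) ≤
      span (derivConstants K R {T, D₁, D₂}) (range ![T, D₁, D₂]) := span_le.2 fun X hX => by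
    obtain ⟨c, rfl, hc⟩ := hk X hX
    refine sum_mem fun i _ => ?_
    have hTc : T (c i) = 0 := by
      by_contra h
      obtain ⟨a, haS, hTa⟩ :=
        exists_mem_derivConstants_apply_eq_one hf.pair_lie_eq_zero (hc i).1 h (hc i).2
      exact ha a haS hTa
    exact smul_mem _ (⟨c i, mem_derivConstants_insert.2 ⟨hTc, (hc i).1⟩⟩ :
      derivConstants K R {T, D₁, D₂}) (Submodule.subset_span (mem_range_self i))
  have := hdim.trans ((rank_mono hle).trans ((rank_span_le _).trans
    (by simpa using Cardinal.mk_range_le_lift (f := ![T, D₁, D₂]))))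
  norm_num at this

lemma apply_mem_derivConstants [LieRing.IsNilpotent L] {a : R}
    (ha : a ∈ derivConstants K R {D₁, D₂}) (hTa : T a = 1) {X : Derivation K R R} (hX : X ∈ L) :
    X a ∈ derivConstants K R {T, D₁, D₂} := by
  have hS : ∀ Y ∈ L, Y a ∈ derivConstants K R {D₁, D₂} := fun Y hY =>
    mapsTo_derivConstants (fun D hD => hf.lie_eq_zero D hD Y hY) ha
  refine mem_derivConstants_insert.2 ⟨?_, hS X hX⟩
  refine T.apply_eq_zero_of_map_lie (fun Y : L => (Y : Derivation K R R) a) (fun Y Y' => ?_)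
    (t := ⟨T, hf.mem⟩) hTa ⟨X, hX⟩
  change ⁅(Y : Derivation K R R), (Y' : Derivation K R R)⁆ a = _
  rw [Derivation.commutator_apply,
    Derivation.apply_eq_apply_mul_of_mem_span (hf.subset_span Y.2) ha hTa (hS Y' Y'.2),
    Derivation.apply_eq_apply_mul_of_mem_span (hf.subset_span Y'.2) ha hTa (hS Y Y.2)]

lemma exists_span_le [CharZero R] [LieRing.IsNilpotent L] {a : R}
    (ha : a ∈ derivConstants K R {D₁, D₂}) (hTa : T a = 1) :
    ∃ n, 1 ≤ n ∧ span (derivConstants K R {T, D₁, D₂}) (L : Set (Derivation K R R)) ≤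
      span (derivConstants K R {T, D₁, D₂})
        {x | x = T ∨ (∃ i ≤ n, x = (a ^ i / (Nat.factorial i : R)) • D₁) ∨
          (∃ i ≤ n, x = (a ^ i / (Nat.factorial i : R)) • D₂)} := by
  obtain ⟨k, hk⟩ := hf.exists_coeffs
  refine ⟨k + 1, le_add_self, span_le.2 fun X hX => ?_⟩
  obtain ⟨c, rfl, hc⟩ := hk X hX
  have hc₀ : (∑ i, c i • ![T, D₁, D₂] i) a = c 0 := by
    simp [Fin.sum_univ_three, hTa, ha D₁ (by simp), ha D₂ (by simp)]
  have hpoly (i : Fin 3) : c i ∈ span (derivConstants K R {T, D₁, D₂})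
      {x | ∃ j ≤ k + 1, x = a ^ j / j.factorial} :=
    mem_span_pow_div_factorial_of_iterate_eq_zero ha hTa hf.pair_lie_eq_zero (hc i).1
      (by rw [Function.iterate_succ_apply', (hc i).2, map_zero])
  have hsmul (i : Fin 3) : c i • ![T, D₁, D₂] i ∈ span (derivConstants K R {T, D₁, D₂})
      ((· • ![T, D₁, D₂] i) '' {x | ∃ j ≤ k + 1, x = a ^ j / j.factorial}) :=
    apply_mem_span_image_of_mem_span
      ((LinearMap.toSpanSingleton R (Derivation K R R) _).restrictScalars _) (hpoly i)
  rw [Fin.sum_univ_three]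
  refine add_mem (add_mem ?_ (span_mono ?_ (hsmul 1))) (span_mono ?_ (hsmul 2))
  · exact smul_mem _ (⟨c 0, hc₀ ▸ hf.apply_mem_derivConstants ha hTa hX⟩ :
      derivConstants K R {T, D₁, D₂}) (Submodule.subset_span (Or.inl rfl))
  · rintro _ ⟨x, ⟨j, hj, rfl⟩, rfl⟩
    exact Or.inr (Or.inl ⟨j, hj, rfl⟩)
  · rintro _ ⟨x, ⟨j, hj, rfl⟩, rfl⟩
    exact Or.inr (Or.inr ⟨j, hj, rfl⟩)

end IsCentralFrame

end CentralFrame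

theorem statement10_general
    (K R : Type*) [Field K] [CharZero K]
    [Field R] [Algebra K R]
    (L : LieSubalgebra K (Derivation K R R))
    (hnil : LieRing.IsNilpotent L)
    (hrk : Module.rank R (Submodule.span R (L : Set (Derivation K R R))) = 3)
    (F : Subfield R) (hF : F = derivConstants K R (L : Set (Derivation K R R)))
    (hZ : Module.rank R (Submodule.span R
      {x : Derivation K R R | x ∈ L ∧ ∀ y ∈ L, ⁅x, y⁆ = 0}) = 2)
    (hdim : 4 ≤ Module.rank F (Submodule.span F (L : Set (Derivation K R R)))) :
    ∃ D₁ ∈ L, ∃ D₂ ∈ L, ∃ D₃ ∈ L, ∃ a : R, ∃ n : ℕ, 1 ≤ n ∧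
      ⁅D₁, D₂⁆ = 0 ∧ ⁅D₁, D₃⁆ = 0 ∧ ⁅D₂, D₃⁆ = 0 ∧
      D₁ a = 0 ∧ D₂ a = 0 ∧ D₃ a = 1 ∧
      Submodule.span F (L : Set (Derivation K R R)) ≤
        Submodule.span F
          {x : Derivation K R R | x = D₃ ∨
            (∃ i ≤ n, x = (a ^ i / (Nat.factorial i : R)) • D₁) ∨
            (∃ i ≤ n, x = (a ^ i / (Nat.factorial i : R)) • D₂)} := by
  have : CharZero R := charZero_of_injective_algebraMap (algebraMap K R).injective
  obtain ⟨T, D₁, D₂, hf⟩ := exists_isCentralFrame hrk hZ.ge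
  subst hF
  rw [hf.derivConstants_eq] at hdim ⊢
  obtain ⟨a, ha, hTa⟩ := hf.exists_apply_eq_one hdim
  obtain ⟨n, hn, hspan⟩ := hf.exists_span_le ha hTa
  have hD₁ : D₁ ∈ ({D₁, D₂} : Set (Derivation K R R)) := by simp
  have hD₂ : D₂ ∈ ({D₁, D₂} : Set (Derivation K R R)) := by simp
  exact ⟨D₁, hf.fst_mem, D₂, hf.snd_mem, T, hf.mem, a, n, hn, hf.lie_eq_zero D₁ hD₁ D₂ hf.snd_mem,
    hf.pair_lie_eq_zero D₁ hD₁, hf.pair_lie_eq_zero D₂ hD₂, ha D₁ hD₁, ha D₂ hD₂, hTa, hspan⟩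

/-- Let `L` be a nilpotent Lie subalgebra of `W(A)` with `rk_R(L) = 3` and
`F = R^L` its field of constants.  If `rk_R(Z(L)) = 2` and `dim_F(FL) ≥ 4`, then there exist
`D₁, D₂, D₃ ∈ L`, `a ∈ R` and `n ≥ 1` with `[Dᵢ, Dⱼ] = 0`, `D₁(a) = D₂(a) = 0`, `D₃(a) = 1`,
such that `FL` is contained in the `F`-span of
`{D₃} ∪ {aⁱ/i!·D₁ : 0 ≤ i ≤ n} ∪ {aⁱ/i!·D₂ : 0 ≤ i ≤ n}`. -/
theorem statement10
    (K A R : Type*) [Field K] [CharZero K] [CommRing A] [IsDomain A] [Algebra K A]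
    [Field R] [Algebra A R] [IsFractionRing A R] [Algebra K R] [IsScalarTower K A R]
    (L : LieSubalgebra K (Derivation K R R))
    (hLW : (L : Set (Derivation K R R)) ⊆ (wAlg K A R : Set (Derivation K R R)))
    (hnil : LieRing.IsNilpotent L)
    (hrk : Module.rank R (Submodule.span R (L : Set (Derivation K R R))) = 3)
    (F : Subfield R) (hF : F = derivConstants K R (L : Set (Derivation K R R)))
    (hZ : Module.rank R (Submodule.span R
      {x : Derivation K R R | x ∈ L ∧ ∀ y ∈ L, ⁅x, y⁆ = 0}) = 2)
    (hdim : 4 ≤ Module.rank F (Submodule.span F (L : Set (Derivation K R R)))) :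
    ∃ D₁ ∈ L, ∃ D₂ ∈ L, ∃ D₃ ∈ L, ∃ a : R, ∃ n : ℕ, 1 ≤ n ∧
      ⁅D₁, D₂⁆ = 0 ∧ ⁅D₁, D₃⁆ = 0 ∧ ⁅D₂, D₃⁆ = 0 ∧
      D₁ a = 0 ∧ D₂ a = 0 ∧ D₃ a = 1 ∧
      Submodule.span F (L : Set (Derivation K R R)) ≤
        Submodule.span F
          {x : Derivation K R R | x = D₃ ∨
            (∃ i ≤ n, x = (a ^ i / (Nat.factorial i : R)) • D₁) ∨
            (∃ i ≤ n, x = (a ^ i / (Nat.factorial i : R)) • D₂)} :=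
  statement10_general K R L hnil hrk F hF hZ hdim
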